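/- arXiv:2308.06070 — 10 statements merged into one kernel-verified Lean document; each statement's English description precedes it below -/
import Mathlib

section
/- For every k ≥ 1, the independence number of the Andrásfai graph Γ_k equals k. -/
open SimpleGraph

/-- An independent set in a graph, as a finset. -/
def IsIndep {V : Type*} (G : SimpleGraph V) (t : Finset V) : Prop :=
  ∀ x ∈ t, ∀ y ∈ t, x ≠ y → ¬ G.Adj x y

/-- The Andrásfai graph `Γ_k`: the Cayley graph on `ZMod (3k-1)` with connection
set `{k, k+1, ..., 2k-1}`. -/
def andrasfai (k : ℕ) : SimpleGraph (ZMod (3 * k - 1)) :=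
  SimpleGraph.fromRel
    (fun i j => ∃ d : ℕ, k ≤ d ∧ d ≤ 2 * k - 1 ∧ i - j = (d : ZMod (3 * k - 1)))

lemma small_not_rel (k : ℕ) (hk : 1 ≤ k) (i j : ℕ) (hi : i < k) (hj : j < k) :
    ¬ ∃ d : ℕ, k ≤ d ∧ d ≤ 2 * k - 1 ∧
      (i : ZMod (3 * k - 1)) - (j : ZMod (3 * k - 1)) = (d : ZMod (3 * k - 1)) := by
  haveI : NeZero (3 * k - 1) := ⟨by omega⟩
  rintro ⟨d, hd1, hd2, hd3⟩
  have h : (i : ZMod (3 * k - 1)) = ((j + d : ℕ) : ZMod (3 * k - 1)) := by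
    push_cast
    linear_combination hd3
  rw [ZMod.natCast_eq_natCast_iff'] at h
  have h1 : i % (3 * k - 1) = i := Nat.mod_eq_of_lt (by omega)
  have h2 : (j + d) % (3 * k - 1) = j + d := Nat.mod_eq_of_lt (by omega)
  omega

/-- for every `k ≥ 1` the independence number of `Γ_k` equals `k`. -/
theorem stmt_3 (k : ℕ) (hk : 1 ≤ k) :
    (∃ t : Finset (ZMod (3 * k - 1)), IsIndep (andrasfai k) t ∧ t.card = k) ∧
      (∀ t : Finset (ZMod (3 * k - 1)), IsIndep (andrasfai k) t → t.card ≤ k) := by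
  haveI : NeZero (3 * k - 1) := ⟨by omega⟩
  constructor
  · refine ⟨(Finset.range k).image (Nat.cast : ℕ → ZMod (3 * k - 1)), ?_, ?_⟩
    · intro x hx y hy hxy hadj
      simp only [Finset.mem_image, Finset.mem_range] at hx hy
      obtain ⟨i, hi, rfl⟩ := hx
      obtain ⟨j, hj, rfl⟩ := hy
      rw [andrasfai, SimpleGraph.fromRel_adj] at hadj
      rcases hadj.2 with h | h
      · exact small_not_rel k hk i j hi hj h
      · exact small_not_rel k hk j i hj hi h
    · rw [Finset.card_image_of_injOn, Finset.card_range]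
      intro i hi j hj hij
      simp only [Finset.coe_range, Set.mem_Iio] at hi hj
      have := congrArg ZMod.val hij
      rwa [ZMod.val_cast_of_lt (by omega), ZMod.val_cast_of_lt (by omega)] at this
  · intro t ht
    rcases t.eq_empty_or_nonempty with rfl | ⟨a, ha⟩
    · simp
    set c : ZMod (3 * k - 1) := ((k - 1 : ℕ) : ZMod (3 * k - 1)) with hc
    set h : ZMod (3 * k - 1) → ℕ := fun x => (x - a + c).val with hhdef
    have hval : ∀ x : ZMod (3 * k - 1), ((h x : ℕ) : ZMod (3 * k - 1)) = x - a + c := by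
      intro x
      simp [hhdef, ZMod.natCast_val, ZMod.cast_id]
    have hinj : Set.InjOn h ↑t := by
      intro x _ y _ hxy
      have hx := hval x
      have hy := hval y
      rw [hxy, hy] at hx
      have := add_right_cancel hx
      exact (sub_left_inj.mp this).symm
    -- bound : h x ≤ 2k - 2 for x ∈ t
    have hb : ∀ x ∈ t, h x ≤ 2 * k - 2 := by
      intro x hx
      by_cases hxa : x = a
      · subst hxa
        simp only [hhdef, sub_self, zero_add, hc]
        rw [ZMod.val_cast_of_lt (by omega)]
        omega
      · set v := (x - a).val with hv
        have hvlt : v < 3 * k - 1 := ZMod.val_lt _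
        have hnrel : ¬ (k ≤ v ∧ v ≤ 2 * k - 1) := by
          rintro ⟨h1, h2⟩
          refine ht x hx a ha hxa ?_
          rw [andrasfai, SimpleGraph.fromRel_adj]
          refine ⟨hxa, Or.inl ⟨v, h1, h2, ?_⟩⟩
          rw [hv]
          simp [ZMod.natCast_val, ZMod.cast_id]
        have hxv : x - a = ((v : ℕ) : ZMod (3 * k - 1)) := by
          rw [hv]; simp [ZMod.natCast_val, ZMod.cast_id]
        have : h x = (v + (k - 1)) % (3 * k - 1) := by
          simp only [hhdef]
          rw [hxv, hc]
          rw [← Nat.cast_add, ZMod.val_natCast]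
        rw [this]
        rcases (by omega : v ≤ k - 1 ∨ 2 * k ≤ v) with h1 | h1
        · rw [Nat.mod_eq_of_lt (by omega)]; omega
        · rw [Nat.mod_eq_sub_mod (by omega), Nat.mod_eq_of_lt (by omega)]
          omega
    -- pairwise : differences at most k-1
    have hp : ∀ x ∈ t, ∀ y ∈ t, h y ≤ h x → h x - h y ≤ k - 1 := by
      intro x hx y hy hle
      by_contra hcon
      have hd1 : k ≤ h x - h y := by omega
      have hd2 : h x - h y ≤ 2 * k - 1 := by
        have := hb x hx
        omega
      have hxy : x ≠ y := by
        rintro rfl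
        omega
      refine ht x hx y hy hxy ?_
      rw [andrasfai, SimpleGraph.fromRel_adj]
      refine ⟨hxy, Or.inl ⟨h x - h y, hd1, hd2, ?_⟩⟩
      rw [Nat.cast_sub hle, hval x, hval y]
      ring
    -- counting
    have hcard : t.card = (t.image h).card :=
      (Finset.card_image_of_injOn hinj).symm
    rw [hcard]
    have hne : (t.image h).Nonempty := ⟨h a, Finset.mem_image_of_mem h ha⟩
    set m := (t.image h).min' hne with hm
    have hsub : t.image h ⊆ Finset.Icc m (m + (k - 1)) := by
      intro s hs
      rw [Finset.mem_Icc]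
      refine ⟨Finset.min'_le _ _ hs, ?_⟩
      obtain ⟨y0, hy0, hy0e⟩ := Finset.mem_image.mp ((t.image h).min'_mem hne)
      obtain ⟨x0, hx0, hx0e⟩ := Finset.mem_image.mp hs
      have hle : h y0 ≤ h x0 := by
        rw [hy0e, hx0e]; exact Finset.min'_le _ _ hs
      have := hp x0 hx0 y0 hy0 hle
      omega
    calc (t.image h).card ≤ (Finset.Icc m (m + (k - 1))).card :=
          Finset.card_le_card hsub
      _ = k := by rw [Nat.card_Icc]; omega
end

section
/- Let G be a triangle-free graph with α(G) = s, let (φ, ψ) be an H-mould for G, let X be an independent set of size s in G, and let y ∈ V(H). Then the following are equivalent: (i) ψ(y) ⊆ X; (ii) ψ(y) ∩ X ≠ ∅; (iii) φ(y) ∩ X = ∅. -/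
open SimpleGraph

/-- let `(φ, ψ)` be an `H`-mould for `G`, `X` an independent set of
size `s`, and `y ∈ V(H)`.  Then `ψ(y) ⊆ X`, `ψ(y) ∩ X ≠ ∅` and `φ(y) ∩ X = ∅`
are equivalent. -/
theorem stmt_6 {V β : Type*} [Fintype V] [DecidableEq V]
    (G : SimpleGraph V) [DecidableRel G.Adj] (H : SimpleGraph β)
    (n s : ℕ) (hcard : Fintype.card V = n) (hn : n < 3 * s)
    (htf : G.CliqueFree 3)
    (hα₁ : ∃ t : Finset V, IsIndep G t ∧ t.card = s)
    (hα₂ : ∀ t : Finset V, IsIndep G t → t.card ≤ s)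
    (φ ψ : β → Finset V)
    (hφinj : Function.Injective φ)
    (hφind : ∀ x, IsIndep G (φ x) ∧ (φ x).card = s)
    (hφadj : ∀ x y : β, x ≠ y → (Disjoint (φ x) (φ y) ↔ H.Adj x y))
    (hψind : ∀ x, IsIndep G (ψ x) ∧ (ψ x).card = 3 * s - n)
    (hψN : ∀ x, ∀ z ∈ ψ x, G.neighborFinset z = φ x)
    (X : Finset V) (hX : IsIndep G X) (hXcard : X.card = s) (y : β) :
    (ψ y ⊆ X ↔ (ψ y ∩ X).Nonempty) ∧ ((ψ y ∩ X).Nonempty ↔ φ y ∩ X = ∅) := by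
  have hψne : (ψ y).Nonempty := by
    rw [← Finset.card_pos, (hψind y).2]; omega
  -- (ii) → (iii)
  have h23 : (ψ y ∩ X).Nonempty → φ y ∩ X = ∅ := by
    rintro ⟨z, hz⟩
    rw [Finset.mem_inter] at hz
    rw [Finset.eq_empty_iff_forall_notMem]
    intro w hw
    rw [Finset.mem_inter] at hw
    have hadj : G.Adj z w := by
      have := hψN y z hz.1
      rw [← SimpleGraph.mem_neighborFinset, this]; exact hw.1
    exact hX z hz.2 w hw.2 (G.ne_of_adj hadj) hadj
  -- (iii) → (i)
  have h31 : φ y ∩ X = ∅ → ψ y ⊆ X := by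
    intro hdisj z hz
    by_contra hzX
    have hNz := hψN y z hz
    have hind : IsIndep G (insert z X) := by
      intro a ha b hb hab hadj
      rw [Finset.mem_insert] at ha hb
      rcases ha with rfl | ha
      · rcases hb with rfl | hb
        · exact hab rfl
        · have : b ∈ φ y := by rw [← hNz]; exact (SimpleGraph.mem_neighborFinset G a b).2 hadj
          exact (Finset.eq_empty_iff_forall_notMem.1 hdisj b) (Finset.mem_inter.2 ⟨this, hb⟩)
      · rcases hb with rfl | hb
        · have : a ∈ φ y := by
            rw [← hNz]; exact (SimpleGraph.mem_neighborFinset G b a).2 hadj.symm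
          exact (Finset.eq_empty_iff_forall_notMem.1 hdisj a) (Finset.mem_inter.2 ⟨this, ha⟩)
        · exact hX a ha b hb hab hadj
    have := hα₂ _ hind
    rw [Finset.card_insert_of_notMem hzX, hXcard] at this
    omega
  constructor
  · constructor
    · intro hsub
      obtain ⟨z, hz⟩ := hψne
      exact ⟨z, Finset.mem_inter.2 ⟨hz, hsub hz⟩⟩
    · intro hne
      exact h31 (h23 hne)
  · constructor
    · exact h23
    · intro hdisj
      obtain ⟨z, hz⟩ := hψne
      exact ⟨z, Finset.mem_inter.2 ⟨hz, h31 hdisj hz⟩⟩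
end

section
/- Let G be a triangle-free graph with α(G) = s and let (φ, ψ) be an H-mould for G. Then the subgraph of G induced by the union of the sets ψ(v), v ∈ V(H), is exactly the blow-up of H with vertex classes ψ(v): for distinct u, v ∈ V(H), every pair of vertices b ∈ ψ(u), b' ∈ ψ(v) is joined by an edge of G if uv ∈ E(H), and no such pair is joined if uv ∉ E(H). -/
open SimpleGraph

/-- if `(φ, ψ)` is an `H`-mould for `G`, then the subgraph of `G`
induced by the union of the sets `ψ(v)` is exactly the blow-up of `H` with
vertex classes `ψ(v)`. -/
theorem stmt_7 {V β : Type*} [Fintype V] [DecidableEq V]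
    (G : SimpleGraph V) [DecidableRel G.Adj] (H : SimpleGraph β)
    (n s : ℕ) (hcard : Fintype.card V = n) (hn : n < 3 * s)
    (htf : G.CliqueFree 3)
    (hα₁ : ∃ t : Finset V, IsIndep G t ∧ t.card = s)
    (hα₂ : ∀ t : Finset V, IsIndep G t → t.card ≤ s)
    (φ ψ : β → Finset V)
    (hφinj : Function.Injective φ)
    (hφind : ∀ x, IsIndep G (φ x) ∧ (φ x).card = s)
    (hφadj : ∀ x y : β, x ≠ y → (Disjoint (φ x) (φ y) ↔ H.Adj x y))
    (hψind : ∀ x, IsIndep G (ψ x) ∧ (ψ x).card = 3 * s - n)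
    (hψne : ∀ x, (ψ x).Nonempty)
    (hψN : ∀ x, ∀ z ∈ ψ x, G.neighborFinset z = φ x) :
    ∀ u v : β, u ≠ v → ∀ b ∈ ψ u, ∀ b' ∈ ψ v, (G.Adj b b' ↔ H.Adj u v) := by
  intro u v huv b hb b' hb'
  have hNb := hψN u b hb
  have hNb' := hψN v b' hb'
  constructor
  · intro hadj
    rw [← hφadj u v huv, Finset.disjoint_left]
    intro z hzu hzv
    have h1 : G.Adj b z := by
      rw [← SimpleGraph.mem_neighborFinset, hNb]; exact hzu
    have h2 : G.Adj b' z := by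
      rw [← SimpleGraph.mem_neighborFinset, hNb']; exact hzv
    exact htf {b, b', z} (SimpleGraph.is3Clique_triple_iff.mpr ⟨hadj, h1, h2⟩)
  · intro hH
    have hdisj : Disjoint (φ u) (φ v) := (hφadj u v huv).mpr hH
    by_cases hmem : b' ∈ φ u
    · rw [← hNb] at hmem
      exact (SimpleGraph.mem_neighborFinset G b b').mp hmem
    · exfalso
      -- b' is adjacent to no vertex of φ u
      have hno : ∀ z ∈ φ u, ¬ G.Adj b' z := by
        intro z hz hadj
        have : z ∈ φ v := by
          rw [← hNb']; exact (SimpleGraph.mem_neighborFinset G b' z).mpr hadj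
        exact (Finset.disjoint_left.mp hdisj hz) this
      have hind : IsIndep G (insert b' (φ u)) := by
        intro x hx y hy hxy hadj
        rcases Finset.mem_insert.mp hx with hx | hx
        · rcases Finset.mem_insert.mp hy with hy | hy
          · exact hxy (hx.trans hy.symm)
          · exact hno y hy (hx ▸ hadj)
        · rcases Finset.mem_insert.mp hy with hy | hy
          · exact hno x hx (hy ▸ hadj.symm)
          · exact (hφind u).1 x hx y hy hxy hadj
      have hle := hα₂ _ hind
      rw [Finset.card_insert_of_notMem hmem, (hφind u).2] at hle
      omega
end

section
/- Let n, s be integers with 4n/11 < s < 3n/8 and let G be a triangle-free graph on n vertices with α(G) ≤ s and e(G) ≥ (ns - (3n-8s)(11s-4n))/2. Then the number of vertices x of G with deg(x) ≤ 4n - 10s is at most 3n - 8s, and in particular strictly less than 3s - n. -/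
open SimpleGraph

/-- if `4n/11 < s < 3n/8` and `G` is triangle-free on `n` vertices
with `α(G) ≤ s` and `e(G) ≥ (ns - (3n-8s)(11s-4n))/2`, then at most `3n - 8s`
vertices (in particular, fewer than `3s - n`) have degree at most `4n - 10s`. -/
theorem stmt_10 {V : Type*} [Fintype V] (G : SimpleGraph V) [DecidableRel G.Adj]
    (n s : ℕ) (h1 : 4 * n < 11 * s) (h2 : 8 * s < 3 * n)
    (hcard : Fintype.card V = n)
    (htf : G.CliqueFree 3)
    (hα : ∀ t : Finset V, IsIndep G t → t.card ≤ s)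
    (he : (n : ℤ) * s - (3 * n - 8 * s) * (11 * s - 4 * n)
            ≤ 2 * G.edgeFinset.card) :
    ((Finset.univ.filter fun x : V => (G.degree x : ℤ) ≤ 4 * n - 10 * s).card : ℤ)
        ≤ 3 * n - 8 * s ∧
      ((Finset.univ.filter fun x : V => (G.degree x : ℤ) ≤ 4 * n - 10 * s).card : ℤ)
        < 3 * s - n := by
  classical
  set A := Finset.univ.filter fun x : V => (G.degree x : ℤ) ≤ 4 * n - 10 * s with hA
  -- every vertex has degree at most s
  have hdeg : ∀ x : V, (G.degree x : ℤ) ≤ s := by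
    intro x
    have hind : IsIndep G (G.neighborFinset x) := by
      intro a ha b hb hab hadj
      rw [SimpleGraph.mem_neighborFinset] at ha hb
      exact htf {x, a, b} (SimpleGraph.is3Clique_triple_iff.mpr ⟨ha, hb, hadj⟩)
    have := hα _ hind
    rw [SimpleGraph.card_neighborFinset_eq_degree] at this
    exact_mod_cast this
  have hsum : (∑ v, (G.degree v : ℤ)) = 2 * G.edgeFinset.card := by
    have := G.sum_degrees_eq_twice_card_edges
    exact_mod_cast congrArg (Nat.cast : ℕ → ℤ) this
  have hsplit : ∑ v ∈ A, (G.degree v : ℤ) + ∑ v ∈ Finset.univ.filter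
      (fun x : V => ¬ ((G.degree x : ℤ) ≤ 4 * n - 10 * s)), (G.degree v : ℤ)
      = ∑ v, (G.degree v : ℤ) :=
    Finset.sum_filter_add_sum_filter_not _ _ _
  have hb1 : ∑ v ∈ A, (G.degree v : ℤ) ≤ A.card * (4 * n - 10 * s) := by
    have := Finset.sum_le_card_nsmul A (fun v => (G.degree v : ℤ)) (4 * n - 10 * s)
      (fun x hx => (Finset.mem_filter.mp hx).2)
    simpa [nsmul_eq_mul] using this
  set B := Finset.univ.filter (fun x : V => ¬ ((G.degree x : ℤ) ≤ 4 * n - 10 * s)) with hB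
  have hb2 : ∑ v ∈ B, (G.degree v : ℤ) ≤ B.card * s := by
    have := Finset.sum_le_card_nsmul B (fun v => (G.degree v : ℤ)) s (fun x _ => hdeg x)
    simpa [nsmul_eq_mul] using this
  have hcards : A.card + B.card = n := by
    rw [hA, hB, Finset.card_filter_add_card_filter_not, Finset.card_univ, hcard]
  have hkey : (n : ℤ) * s - (3 * n - 8 * s) * (11 * s - 4 * n)
      ≤ A.card * (4 * n - 10 * s) + B.card * s := by
    calc (n : ℤ) * s - (3 * n - 8 * s) * (11 * s - 4 * n)
        ≤ 2 * G.edgeFinset.card := he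
      _ = ∑ v, (G.degree v : ℤ) := hsum.symm
      _ = ∑ v ∈ A, (G.degree v : ℤ) + ∑ v ∈ B, (G.degree v : ℤ) := hsplit.symm
      _ ≤ A.card * (4 * n - 10 * s) + B.card * s := add_le_add hb1 hb2
  have hcast : (A.card : ℤ) + B.card = n := by exact_mod_cast hcards
  have h1' : (4 : ℤ) * n < 11 * s := by exact_mod_cast h1
  have h2' : (8 : ℤ) * s < 3 * n := by exact_mod_cast h2
  have hk : (A.card : ℤ) ≤ 3 * n - 8 * s := by nlinarith [hkey, hcast]
  exact ⟨hk, by linarith⟩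
end

section
/- For all integers n and s with kn/(3k-1) ≤ s ≤ (k-1)n/(3k-4) and k ≥ 2, the canonical blow-up G(n;k,s) of Γ_k, obtained by replacing vertices 1, k, 2k of Γ_k by independent sets of size (k-1)n - (3k-4)s each and the remaining 3k-4 vertices by independent sets of size 3s - n each, has exactly n vertices and exactly g_k(n,s) = (1/2)k(k-1)n² - k(3k-4)ns + (1/2)(3k-4)(3k-1)s² edges. -/
open SimpleGraph

/-- The sizes of the vertex classes of the canonical blow-up `G(n;k,s)`:
the vertices `1`, `k`, `2k` of `Γ_k` get classes of size `(k-1)n - (3k-4)s`,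
all other vertices get classes of size `3s - n`. -/
def csize (k n s : ℕ) (i : ZMod (3 * k - 1)) : ℕ :=
  if i = 1 ∨ i = (k : ZMod (3 * k - 1)) ∨ i = (2 * k : ZMod (3 * k - 1)) then
    (k - 1) * n - (3 * k - 4) * s
  else 3 * s - n

/-- The canonical blow-up `G(n;k,s)` of `Γ_k`: each vertex `i` of `Γ_k` is
replaced by an independent set of size `csize k n s i`, and two classes are
completely joined iff the corresponding vertices are adjacent in `Γ_k`. -/
def canonical (k n s : ℕ) :
    SimpleGraph (Σ i : ZMod (3 * k - 1), Fin (csize k n s i)) :=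
  (andrasfai k).comap Sigma.fst

/-! ### Auxiliary definitions and lemmas -/

/-- The connection set of `Γ_k` as a finset of `ZMod (3k-1)`. -/
def Cset (k : ℕ) : Finset (ZMod (3 * k - 1)) :=
  (Finset.Icc k (2 * k - 1)).image (Nat.cast)

/-- Integer indicator of the three special classes. -/
def chi (k : ℕ) (z : ZMod (3 * k - 1)) : ℤ :=
  if z = 1 ∨ z = (k : ZMod (3 * k - 1)) ∨ z = (2 * k : ZMod (3 * k - 1)) then 1 else 0

section Aux

variable {k : ℕ} (hk : 2 ≤ k)
include hk

lemma castinj {x y : ℕ} (hx : x < 3 * k - 1) (hy : y < 3 * k - 1) :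
    ((x : ZMod (3 * k - 1)) = (y : ZMod (3 * k - 1))) ↔ x = y := by
  haveI : NeZero (3 * k - 1) := ⟨by omega⟩
  constructor
  · intro h
    have := congrArg ZMod.val h
    rwa [ZMod.val_cast_of_lt hx, ZMod.val_cast_of_lt hy] at this
  · rintro rfl; rfl

lemma mem_Cset {x : ℕ} (hx : x < 3 * k - 1) :
    ((x : ZMod (3 * k - 1)) ∈ Cset k) ↔ (k ≤ x ∧ x ≤ 2 * k - 1) := by
  unfold Cset
  simp only [Finset.mem_image, Finset.mem_Icc]
  constructor
  · rintro ⟨d, ⟨hd1, hd2⟩, hd3⟩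
    have : d = x := (castinj hk (by omega) hx).mp hd3
    omega
  · intro h
    exact ⟨x, h, rfl⟩

lemma card_Cset : (Cset k).card = k := by
  unfold Cset
  rw [Finset.card_image_of_injOn, Nat.card_Icc]
  · omega
  · intro x hx y hy hxy
    simp only [Finset.coe_Icc, Set.mem_Icc] at hx hy
    exact (castinj hk (by omega) (by omega)).mp hxy

lemma zero_not_mem_Cset : (0 : ZMod (3 * k - 1)) ∉ Cset k := by
  intro h
  rw [show (0 : ZMod (3 * k - 1)) = ((0 : ℕ) : ZMod (3 * k - 1)) by norm_cast] at h
  have := (mem_Cset hk (by omega)).mp h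
  omega

lemma neg_mem_Cset {z : ZMod (3 * k - 1)} (hz : z ∈ Cset k) : -z ∈ Cset k := by
  obtain ⟨d, hd, rfl⟩ := Finset.mem_image.mp hz
  rw [Finset.mem_Icc] at hd
  have h1 : -((d : ℕ) : ZMod (3 * k - 1)) = ((3 * k - 1 - d : ℕ) : ZMod (3 * k - 1)) := by
    rw [Nat.cast_sub (by omega), ZMod.natCast_self, zero_sub]
  rw [h1, mem_Cset hk (by omega)]
  omega

lemma adj_iff {i j : ZMod (3 * k - 1)} :
    (andrasfai k).Adj i j ↔ j - i ∈ Cset k := by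
  rw [andrasfai, SimpleGraph.fromRel_adj]
  constructor
  · rintro ⟨hne, (⟨d, hd1, hd2, hd3⟩ | ⟨d, hd1, hd2, hd3⟩)⟩
    · have : i - j ∈ Cset k := by
        rw [hd3, mem_Cset hk (by omega)]; omega
      have := neg_mem_Cset hk this
      rwa [neg_sub] at this
    · rw [hd3, mem_Cset hk (by omega)]; omega
  · intro h
    obtain ⟨d, hd, hd3⟩ := Finset.mem_image.mp h
    rw [Finset.mem_Icc] at hd
    refine ⟨?_, Or.inr ⟨d, hd.1, hd.2, hd3.symm⟩⟩
    rintro rfl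
    rw [sub_self] at h
    exact zero_not_mem_Cset hk h

lemma wrap (x y : ℕ) (hy : y ≤ 3 * k - 1) :
    (x : ZMod (3 * k - 1)) - (y : ZMod (3 * k - 1))
      = ((x + (3 * k - 1) - y : ℕ) : ZMod (3 * k - 1)) := by
  rw [Nat.cast_sub (by omega), Nat.cast_add, ZMod.natCast_self]
  ring

end Aux

/-- for `k ≥ 2` and `kn/(3k-1) ≤ s ≤ (k-1)n/(3k-4)`, the canonical
blow-up `G(n;k,s)` has exactly `n` vertices and exactly
`g_k(n,s) = ½k(k-1)n² - k(3k-4)ns + ½(3k-4)(3k-1)s²` edges. -/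
theorem stmt_11 (k n s : ℕ) (hk : 2 ≤ k)
    (h1 : k * n ≤ (3 * k - 1) * s) (h2 : (3 * k - 4) * s ≤ (k - 1) * n) :
    haveI : NeZero (3 * k - 1) := ⟨by omega⟩
    haveI : DecidableRel (canonical k n s).Adj := Classical.decRel _
    Fintype.card (Σ i : ZMod (3 * k - 1), Fin (csize k n s i)) = n ∧
      (2 * (canonical k n s).edgeFinset.card : ℤ) =
        (k : ℤ) * (k - 1) * n ^ 2 - 2 * k * (3 * k - 4) * n * s
          + (3 * k - 4) * (3 * k - 1) * s ^ 2 := by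
  haveI : NeZero (3 * k - 1) := ⟨by omega⟩
  letI : DecidableRel (canonical k n s).Adj := Classical.decRel _
  haveI hDA : DecidableRel (andrasfai k).Adj := Classical.decRel _
  have hn3s : n ≤ 3 * s := by
    by_contra hcon
    push_neg at hcon
    have h1' : (k : ℤ) * n ≤ (3 * (k : ℤ) - 1) * s := by
      have h := h1
      zify [show (1 : ℕ) ≤ 3 * k from by omega] at h
      convert h using 1 <;> push_cast <;> ring
    have hcon' : 3 * (s : ℤ) + 1 ≤ (n : ℤ) := by exact_mod_cast hcon
    have hk' : (2 : ℤ) ≤ (k : ℤ) := by exact_mod_cast hk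
    have hs' : (0 : ℤ) ≤ (s : ℤ) := by positivity
    nlinarith
  set a' : ℤ := ((k : ℤ) - 1) * n - (3 * (k : ℤ) - 4) * s with ha'
  set b' : ℤ := 3 * (s : ℤ) - (n : ℤ) with hb'
  -- the integer value of csize
  have hc : ∀ z : ZMod (3 * k - 1),
      ((csize k n s z : ℤ)) = b' + (a' - b') * chi k z := by
    intro z
    unfold csize chi
    by_cases h : z = 1 ∨ z = ((k : ℕ) : ZMod (3 * k - 1)) ∨ z = (2 * (k : ZMod (3 * k - 1)))
    · rw [if_pos h, if_pos h, Nat.cast_sub h2, Nat.cast_mul, Nat.cast_mul,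
        Nat.cast_sub (by omega : 1 ≤ k), Nat.cast_sub (by omega : 4 ≤ 3 * k)]
      push_cast
      ring
    · rw [if_neg h, if_neg h, Nat.cast_sub hn3s]
      push_cast
      ring
  -- bridging casts
  have E1 : (1 : ZMod (3 * k - 1)) = ((1 : ℕ) : ZMod (3 * k - 1)) := by norm_cast
  have E2 : (2 * (k : ZMod (3 * k - 1))) = ((2 * k : ℕ) : ZMod (3 * k - 1)) := by
    push_cast; ring
  -- distinctness of the three special vertices
  have d1k : ((1 : ℕ) : ZMod (3 * k - 1)) ≠ ((k : ℕ) : ZMod (3 * k - 1)) := fun h => by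
    have := (castinj hk (by omega) (by omega)).mp h; omega
  have d1k2 : ((1 : ℕ) : ZMod (3 * k - 1)) ≠ ((2 * k : ℕ) : ZMod (3 * k - 1)) := fun h => by
    have := (castinj hk (by omega) (by omega)).mp h; omega
  have dkk2 : ((k : ℕ) : ZMod (3 * k - 1)) ≠ ((2 * k : ℕ) : ZMod (3 * k - 1)) := fun h => by
    have := (castinj hk (by omega) (by omega)).mp h; omega
  have chi_split : ∀ z : ZMod (3 * k - 1),
      chi k z = (if z = ((1 : ℕ) : ZMod (3 * k - 1)) then (1 : ℤ) else 0)
        + (if z = ((k : ℕ) : ZMod (3 * k - 1)) then 1 else 0)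
        + (if z = ((2 * k : ℕ) : ZMod (3 * k - 1)) then 1 else 0) := by
    intro z
    unfold chi
    rw [E1, E2]
    by_cases p1 : z = ((1 : ℕ) : ZMod (3 * k - 1)) <;>
      by_cases p2 : z = ((k : ℕ) : ZMod (3 * k - 1)) <;>
      by_cases p3 : z = ((2 * k : ℕ) : ZMod (3 * k - 1)) <;>
      simp_all
  -- degree of each vertex
  have hns : ∀ v : (Σ i : ZMod (3 * k - 1), Fin (csize k n s i)),
      (canonical k n s).degree v
        = ∑ j : ZMod (3 * k - 1), if (andrasfai k).Adj v.1 j then csize k n s j else 0 := by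
    intro v
    rw [← SimpleGraph.card_neighborFinset_eq_degree, SimpleGraph.neighborFinset_eq_filter,
      Finset.card_filter, ← Finset.univ_sigma_univ, Finset.sum_sigma]
    refine Finset.sum_congr rfl fun j _ => ?_
    by_cases h : (andrasfai k).Adj v.1 j
    · simp [canonical, h]
    · simp [canonical, h]
  have hsum : ∑ v, (canonical k n s).degree v
      = ∑ i : ZMod (3 * k - 1), ∑ j : ZMod (3 * k - 1),
          if (andrasfai k).Adj i j then csize k n s i * csize k n s j else 0 := by
    rw [← Finset.univ_sigma_univ, Finset.sum_sigma]
    refine Finset.sum_congr rfl fun i _ => ?_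
    calc ∑ x : Fin (csize k n s i), (canonical k n s).degree ⟨i, x⟩
        = ∑ _x : Fin (csize k n s i), ∑ j : ZMod (3 * k - 1),
            (if (andrasfai k).Adj i j then csize k n s j else 0) :=
          Finset.sum_congr rfl fun x _ => hns ⟨i, x⟩
      _ = (csize k n s i) * ∑ j : ZMod (3 * k - 1),
            (if (andrasfai k).Adj i j then csize k n s j else 0) := by
          rw [Finset.sum_const, Finset.card_univ, Fintype.card_fin, smul_eq_mul]
      _ = ∑ j : ZMod (3 * k - 1),
            (if (andrasfai k).Adj i j then csize k n s i * csize k n s j else 0) := by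
          rw [Finset.mul_sum]
          exact Finset.sum_congr rfl fun j _ => by split_ifs <;> simp
  have hhs : ∑ v, (canonical k n s).degree v = 2 * (canonical k n s).edgeFinset.card :=
    SimpleGraph.sum_degrees_eq_twice_card_edges _
  have step2 : (2 * ((canonical k n s).edgeFinset.card : ℤ))
      = ∑ i : ZMod (3 * k - 1), ∑ j : ZMod (3 * k - 1),
          (if (andrasfai k).Adj i j then (csize k n s i : ℤ) * csize k n s j else 0) := by
    have h := congrArg (fun m : ℕ => (m : ℤ)) (hhs.symm.trans hsum)
    push_cast [apply_ite (fun m : ℕ => (m : ℤ))] at h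
    exact h
  have step3 : ∀ i : ZMod (3 * k - 1),
      (∑ j : ZMod (3 * k - 1),
          if (andrasfai k).Adj i j then ((csize k n s i : ℤ)) * csize k n s j else 0)
        = ∑ d ∈ Cset k, (csize k n s i : ℤ) * csize k n s (i + d) := by
    intro i
    rw [← Finset.sum_filter]
    refine Finset.sum_nbij' (fun j => j - i) (fun d => i + d) ?_ ?_ ?_ ?_ ?_
    · intro a ha
      rw [Finset.mem_filter] at ha
      exact (adj_iff hk).mp ha.2
    · intro d hd
      rw [Finset.mem_filter]
      refine ⟨Finset.mem_univ _, (adj_iff hk).mpr ?_⟩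
      simpa using hd
    · intro a _; ring
    · intro a _; ring
    · intro a _; rw [show i + (a - i) = a from by ring]
  have step4 : (2 * ((canonical k n s).edgeFinset.card : ℤ))
      = ∑ d ∈ Cset k, ∑ i : ZMod (3 * k - 1), (csize k n s i : ℤ) * csize k n s (i + d) := by
    rw [step2, Finset.sum_congr rfl fun i _ => step3 i, Finset.sum_comm]
  -- sums of chi
  have sum_chi : ∑ i : ZMod (3 * k - 1), chi k i = 3 := by
    rw [Finset.sum_congr rfl fun i _ => chi_split i]
    rw [Finset.sum_add_distrib, Finset.sum_add_distrib,
      Finset.sum_ite_eq' Finset.univ _ (fun _ => (1 : ℤ)),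
      Finset.sum_ite_eq' Finset.univ _ (fun _ => (1 : ℤ)),
      Finset.sum_ite_eq' Finset.univ _ (fun _ => (1 : ℤ))]
    simp
  have sum_chi_shift : ∀ d : ZMod (3 * k - 1), ∑ i : ZMod (3 * k - 1), chi k (i + d) = 3 := by
    intro d
    exact (Fintype.sum_equiv (Equiv.addRight d) (fun i => chi k (i + d)) (chi k)
      fun i => rfl).trans sum_chi
  have hcard : ((Fintype.card (ZMod (3 * k - 1)) : ℕ) : ℤ) = 3 * (k : ℤ) - 1 := by
    rw [ZMod.card, Nat.cast_sub (by omega : 1 ≤ 3 * k)]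
    push_cast
    ring
  have inner_sum : ∀ d : ZMod (3 * k - 1),
      ∑ i : ZMod (3 * k - 1), (csize k n s i : ℤ) * csize k n s (i + d)
        = ((3 * (k : ℤ) - 1) * (b' * b') + 6 * (b' * (a' - b')))
          + (a' - b') ^ 2 * ∑ i : ZMod (3 * k - 1), chi k i * chi k (i + d) := by
    intro d
    calc ∑ i : ZMod (3 * k - 1), (csize k n s i : ℤ) * csize k n s (i + d)
        = ∑ i : ZMod (3 * k - 1),
            (b' + (a' - b') * chi k i) * (b' + (a' - b') * chi k (i + d)) :=
          Finset.sum_congr rfl fun i _ => by rw [hc i, hc (i + d)]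
      _ = ∑ i : ZMod (3 * k - 1),
            (b' * b' + ((b' * (a' - b')) * chi k (i + d) + ((b' * (a' - b')) * chi k i
              + (a' - b') ^ 2 * (chi k i * chi k (i + d))))) :=
          Finset.sum_congr rfl fun i _ => by ring
      _ = (Fintype.card (ZMod (3 * k - 1)) : ℤ) * (b' * b')
            + ((b' * (a' - b')) * (∑ i : ZMod (3 * k - 1), chi k (i + d))
            + ((b' * (a' - b')) * (∑ i : ZMod (3 * k - 1), chi k i)
            + (a' - b') ^ 2 * ∑ i : ZMod (3 * k - 1), chi k i * chi k (i + d))) := by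
          rw [Finset.sum_add_distrib, Finset.sum_add_distrib, Finset.sum_add_distrib,
            Finset.sum_const, ← Finset.mul_sum, ← Finset.mul_sum, ← Finset.mul_sum,
            Finset.card_univ, nsmul_eq_mul]
      _ = _ := by rw [sum_chi, sum_chi_shift d, hcard]; ring
  -- the nine membership facts
  have f11 : ((1 : ℕ) : ZMod (3 * k - 1)) - ((1 : ℕ) : ZMod (3 * k - 1)) ∉ Cset k := by
    rw [sub_self]; exact zero_not_mem_Cset hk
  have fk1 : ((k : ℕ) : ZMod (3 * k - 1)) - ((1 : ℕ) : ZMod (3 * k - 1)) ∉ Cset k := by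
    rw [← Nat.cast_sub (by omega : 1 ≤ k)]
    intro h
    have := (mem_Cset hk (by omega)).mp h
    omega
  have fk2_1 : ((2 * k : ℕ) : ZMod (3 * k - 1)) - ((1 : ℕ) : ZMod (3 * k - 1)) ∈ Cset k := by
    rw [← Nat.cast_sub (by omega : 1 ≤ 2 * k)]
    rw [mem_Cset hk (by omega)]
    omega
  have f1k : ((1 : ℕ) : ZMod (3 * k - 1)) - ((k : ℕ) : ZMod (3 * k - 1)) ∉ Cset k := by
    rw [wrap hk 1 k (by omega), show 1 + (3 * k - 1) - k = 2 * k by omega]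
    intro h
    have := (mem_Cset hk (by omega)).mp h
    omega
  have fkk : ((k : ℕ) : ZMod (3 * k - 1)) - ((k : ℕ) : ZMod (3 * k - 1)) ∉ Cset k := by
    rw [sub_self]; exact zero_not_mem_Cset hk
  have fk2k : ((2 * k : ℕ) : ZMod (3 * k - 1)) - ((k : ℕ) : ZMod (3 * k - 1)) ∈ Cset k := by
    rw [← Nat.cast_sub (by omega : k ≤ 2 * k), show 2 * k - k = k by omega]
    rw [mem_Cset hk (by omega)]
    omega
  have f1k2 : ((1 : ℕ) : ZMod (3 * k - 1)) - ((2 * k : ℕ) : ZMod (3 * k - 1)) ∈ Cset k := by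
    rw [wrap hk 1 (2 * k) (by omega), show 1 + (3 * k - 1) - 2 * k = k by omega]
    rw [mem_Cset hk (by omega)]
    omega
  have fkk2 : ((k : ℕ) : ZMod (3 * k - 1)) - ((2 * k : ℕ) : ZMod (3 * k - 1)) ∈ Cset k := by
    rw [wrap hk k (2 * k) (by omega), show k + (3 * k - 1) - 2 * k = 2 * k - 1 by omega]
    rw [mem_Cset hk (by omega)]
    omega
  have fk2k2 : ((2 * k : ℕ) : ZMod (3 * k - 1)) - ((2 * k : ℕ) : ZMod (3 * k - 1)) ∉ Cset k := by
    rw [sub_self]; exact zero_not_mem_Cset hk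
  -- the key count: 4
  have hg : ∀ i : ZMod (3 * k - 1), (∑ d ∈ Cset k, chi k (i + d))
      = (if ((1 : ℕ) : ZMod (3 * k - 1)) - i ∈ Cset k then (1 : ℤ) else 0)
        + (if ((k : ℕ) : ZMod (3 * k - 1)) - i ∈ Cset k then 1 else 0)
        + (if ((2 * k : ℕ) : ZMod (3 * k - 1)) - i ∈ Cset k then 1 else 0) := by
    intro i
    rw [Finset.sum_congr rfl fun d _ => chi_split (i + d)]
    rw [Finset.sum_add_distrib, Finset.sum_add_distrib]
    have key : ∀ a : ZMod (3 * k - 1),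
        (∑ d ∈ Cset k, if i + d = a then (1 : ℤ) else 0)
          = if a - i ∈ Cset k then (1 : ℤ) else 0 := by
      intro a
      rw [Finset.sum_congr rfl fun d _ =>
        if_congr (show i + d = a ↔ d = a - i by rw [eq_sub_iff_add_eq, add_comm]) rfl rfl]
      exact Finset.sum_ite_eq' (Cset k) (a - i) (fun _ => (1 : ℤ))
    rw [key, key, key]
  have expand : ∀ G : ZMod (3 * k - 1) → ℤ,
      (∑ i : ZMod (3 * k - 1), chi k i * G i)
        = G ((1 : ℕ) : ZMod (3 * k - 1)) + G ((k : ℕ) : ZMod (3 * k - 1))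
          + G ((2 * k : ℕ) : ZMod (3 * k - 1)) := by
    intro G
    rw [Finset.sum_congr rfl fun i _ => by
      rw [chi_split i, add_mul, add_mul, ite_mul, ite_mul, ite_mul, one_mul, zero_mul]]
    rw [Finset.sum_add_distrib, Finset.sum_add_distrib,
      Finset.sum_ite_eq' Finset.univ _ G, Finset.sum_ite_eq' Finset.univ _ G,
      Finset.sum_ite_eq' Finset.univ _ G]
    simp
  have hM : ∑ d ∈ Cset k, ∑ i : ZMod (3 * k - 1), chi k i * chi k (i + d) = 4 := by
    rw [Finset.sum_comm]
    rw [Finset.sum_congr rfl fun i _ => (Finset.mul_sum (Cset k) (fun d => chi k (i + d)) (chi k i)).symm]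
    rw [expand (fun i => ∑ d ∈ Cset k, chi k (i + d))]
    rw [hg, hg, hg]
    rw [if_neg f11, if_neg fk1, if_pos fk2_1, if_neg f1k, if_neg fkk, if_pos fk2k,
      if_pos f1k2, if_pos fkk2, if_neg fk2k2]
    norm_num
  -- final edge count
  have hedge : (2 * ((canonical k n s).edgeFinset.card : ℤ))
      = (k : ℤ) * ((3 * (k : ℤ) - 1) * (b' * b') + 6 * (b' * (a' - b')))
        + (a' - b') ^ 2 * 4 := by
    rw [step4, Finset.sum_congr rfl fun d _ => inner_sum d, Finset.sum_add_distrib,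
      Finset.sum_const, ← Finset.mul_sum, hM, card_Cset hk, nsmul_eq_mul]
  -- vertex count
  have hv : Fintype.card (Σ i : ZMod (3 * k - 1), Fin (csize k n s i)) = n := by
    have hcast : ((Fintype.card (Σ i : ZMod (3 * k - 1), Fin (csize k n s i)) : ℕ) : ℤ)
        = (n : ℤ) := by
      rw [Fintype.card_sigma]
      push_cast [Fintype.card_fin]
      rw [Finset.sum_congr rfl fun i _ => hc i, Finset.sum_add_distrib, Finset.sum_const,
        ← Finset.mul_sum, sum_chi, Finset.card_univ, nsmul_eq_mul, hcard, ha', hb']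
      ring
    exact_mod_cast hcast
  have final : (2 * ((canonical k n s).edgeFinset.card : ℤ))
      = (k : ℤ) * ((k : ℤ) - 1) * (n : ℤ) ^ 2 - 2 * (k : ℤ) * (3 * (k : ℤ) - 4) * n * s
        + (3 * (k : ℤ) - 4) * (3 * (k : ℤ) - 1) * (s : ℤ) ^ 2 := by
    rw [hedge, ha', hb']
    ring
  exact ⟨hv, final⟩
end

section
/- For k = 4 and all integers n, s with 4n/11 ≤ s ≤ 3n/8, the canonical blow-up G(n;4,s) of Γ_4 (replacing vertices 1, 4, 8 of Γ_4 by independent sets of size 3n - 8s and the other eight vertices by independent sets of size 3s - n) is triangle-free, has n vertices, independence number exactly s, and exactly 6n² - 32ns + 44s² edges; consequently ex(n,s) ≥ 6n² - 32ns + 44s². -/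
open SimpleGraph

open scoped Classical in
/-- `ex n s`: the maximum number of edges of a triangle-free graph on `n`
vertices whose independence number is at most `s`. -/
noncomputable def exRT (n s : ℕ) : ℕ :=
  sSup {m | ∃ G : SimpleGraph (Fin n), G.CliqueFree 3 ∧
    (∀ t : Finset (Fin n), IsIndep G t → t.card ≤ s) ∧ G.edgeFinset.card = m}

/-! Call the vertices `1, 4, 8` of `Γ₄` heavy (their classes have size `3n - 8s`) and the
others light. Every independent set of `Γ₄` lies in four cyclically consecutive vertices, and
each such window contains either one heavy and three light vertices, or the heavy pair `1, 4`
and two light ones. So an independent set of the blow-up has at most `(3n - 8s) + 3(3s - n) = s`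
vertices, with equality for the window `{0, 1, 2, 3}`. Triangles and edges are pulled back along
the projection to `Γ₄`: twice the number of edges is the quadratic form `∑ᵢ cᵢ ∑_{j ~ i} cⱼ` in
the class sizes `cᵢ`. -/

open Finset

namespace SimpleGraph

variable {V W : Type*}

theorem CliqueFree.of_hom {G : SimpleGraph V} {H : SimpleGraph W} {n : ℕ} (f : G →g H)
    (h : H.CliqueFree n) : G.CliqueFree n := by
  by_contra hG
  obtain ⟨c⟩ := (not_cliqueFree_iff_top_isContained n).1 hG
  let g := f.comp c.toHom
  exact (not_cliqueFree_iff_top_isContained n).2 ⟨g.toCopy (Hom.injective_of_top_hom g)⟩ h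

end SimpleGraph

section IsIndep

variable {V W : Type*} {G : SimpleGraph W} {f : V → W}

theorem IsIndep.image_of_comap [DecidableEq W] {t : Finset V} (ht : IsIndep (G.comap f) t) :
    IsIndep G (t.image f) := by
  simp only [IsIndep, mem_image]
  rintro _ ⟨v, hv, rfl⟩ _ ⟨w, hw, rfl⟩ hne
  exact ht v hv w hw (ne_of_apply_ne f hne)

theorem IsIndep.comap_of_mapsTo {J : Finset W} (hJ : IsIndep G J) {t : Finset V}
    (ht : ∀ v ∈ t, f v ∈ J) : IsIndep (G.comap f) t := fun v hv w hw _ hadj =>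
  hJ _ (ht v hv) _ (ht w hw) (G.ne_of_adj hadj) hadj

end IsIndep

section BlowUp

variable {ι : Type*} {α : ι → Type*} [∀ i, Fintype (α i)]

theorem card_le_sum_card_image_sigmaFst [DecidableEq ι] (t : Finset (Σ i, α i)) :
    #t ≤ ∑ i ∈ t.image Sigma.fst, Fintype.card (α i) := by
  calc #t ≤ #((t.image Sigma.fst).sigma fun _ => univ) :=
        card_le_card fun v hv => mem_sigma.2 ⟨mem_image_of_mem _ hv, mem_univ _⟩
    _ = _ := by simp only [card_sigma, card_univ]

variable [Fintype ι] (H : SimpleGraph ι) [DecidableRel H.Adj]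

theorem neighborFinset_comap_sigmaFst [DecidableRel (H.comap (Sigma.fst : (Σ i, α i) → ι)).Adj]
    (i : ι) (x : α i) :
    (H.comap Sigma.fst).neighborFinset ⟨i, x⟩ = (H.neighborFinset i).sigma fun _ => univ := by
  ext w
  simp only [mem_neighborFinset, mem_sigma, mem_univ, and_true, comap_adj]

theorem two_mul_card_edgeFinset_comap_sigmaFst
    [DecidableRel (H.comap (Sigma.fst : (Σ i, α i) → ι)).Adj] :
    2 * #(H.comap (Sigma.fst : (Σ i, α i) → ι)).edgeFinset =
      ∑ i, Fintype.card (α i) * ∑ j ∈ H.neighborFinset i, Fintype.card (α j) := by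
  rw [← sum_degrees_eq_twice_card_edges, ← univ_sigma_univ, sum_sigma]
  refine sum_congr rfl fun i _ => ?_
  simp only [← card_neighborFinset_eq_degree, neighborFinset_comap_sigmaFst, card_sigma,
    card_univ, sum_const, smul_eq_mul]

end BlowUp

theorem sum_ite_mem_const {α M : Type*} [DecidableEq α] [AddCommMonoid M] (J K : Finset α)
    (x y : M) :
    ∑ i ∈ J, (if i ∈ K then x else y) = #(J ∩ K) • x + #(J \ K) • y := by
  rw [sum_ite, sum_const, sum_const, filter_mem_eq_inter, filter_notMem_eq_sdiff]

theorem le_exRT {V : Type*} [Fintype V] {G : SimpleGraph V} [DecidableRel G.Adj] {n s : ℕ}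
    (hV : Fintype.card V = n) (hG : G.CliqueFree 3) (hs : ∀ t, IsIndep G t → #t ≤ s) :
    #G.edgeFinset ≤ exRT n s := by
  classical
  let e := Fintype.equivFinOfCardEq hV
  refine le_csSup ⟨Fintype.card (Sym2 (Fin n)), ?_⟩
    ⟨G.comap e.symm, hG.of_hom (Hom.comap _ G), fun t ht => ?_, ?_⟩
  · rintro _ ⟨G', -, -, rfl⟩
    exact card_le_univ _
  · simpa only [card_image_of_injective _ e.symm.injective] using hs _ ht.image_of_comap
  · convert (Iso.comap e.symm G).card_edgeFinset_eq

section AndrasfaiFour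

local notation "Z₁₁" => ZMod (3 * 4 - 1)

theorem andrasfai_four_adj_iff (i j : Z₁₁) :
    (andrasfai 4).Adj i j ↔ i - j ∈ ({4, 5, 6, 7} : Finset Z₁₁) := by
  have connection : ∀ x : Z₁₁,
      (∃ d : ℕ, 4 ≤ d ∧ d ≤ 2 * 4 - 1 ∧ x = d) ↔ x ∈ ({4, 5, 6, 7} : Finset Z₁₁) := by
    refine fun x => ⟨?_, fun hx => ?_⟩
    · rintro ⟨d, hd4, hd7, rfl⟩
      interval_cases d <;> decide
    · simp only [mem_insert, mem_singleton] at hx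
      rcases hx with rfl | rfl | rfl | rfl
      exacts [⟨4, le_rfl, by norm_num, rfl⟩, ⟨5, by norm_num, by norm_num, rfl⟩,
        ⟨6, by norm_num, by norm_num, rfl⟩, ⟨7, by norm_num, le_rfl, rfl⟩]
  simp only [andrasfai, fromRel_adj]
  rw [connection, connection, ← neg_sub i j, ← sub_ne_zero]
  generalize i - j = x
  revert x
  decide

instance : DecidableRel (andrasfai 4).Adj := fun i j =>
  decidable_of_iff' _ (andrasfai_four_adj_iff i j)

theorem andrasfai_four_cliqueFree : (andrasfai 4).CliqueFree 3 := by
  have no_triangle : ∀ a b c : Z₁₁,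
      (andrasfai 4).Adj a b → (andrasfai 4).Adj a c → ¬ (andrasfai 4).Adj b c := by
    decide
  intro t ht
  obtain ⟨a, b, c, hab, hac, hbc, -⟩ := is3Clique_iff.1 ht
  exact no_triangle a b c hab hac hbc

theorem IsIndep.subset_interval_andrasfai_four {J : Finset Z₁₁} (hJ : IsIndep (andrasfai 4) J) :
    ∃ a : Z₁₁, J ⊆ {a, a + 1, a + 2, a + 3} := by
  have key : ∀ J : Finset Z₁₁, IsIndep (andrasfai 4) J →
      ∃ a : Z₁₁, J ⊆ {a, a + 1, a + 2, a + 3} := by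
    unfold IsIndep
    decide +kernel
  exact key J hJ

theorem sum_zmod_eleven {M : Type*} [AddCommMonoid M] (f : Z₁₁ → M) :
    ∑ i, f i = f 0 + f 1 + f 2 + f 3 + f 4 + f 5 + f 6 + f 7 + f 8 + f 9 + f 10 := by
  rw [show (univ : Finset Z₁₁) = {0, 1, 2, 3, 4, 5, 6, 7, 8, 9, 10} by decide]
  simp +decide only [sum_insert, sum_singleton, mem_insert, mem_singleton]
  abel

local notation "𝓗" => ({1, 4, 8} : Finset Z₁₁)

theorem csize_four (n s : ℕ) (i : Z₁₁) :
    csize 4 n s i = if i ∈ 𝓗 then 3 * n - 8 * s else 3 * s - n := by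
  simp only [csize, mem_insert, mem_singleton]
  congr 1

theorem sum_andrasfai_four_neighbor_weights {R : Type*} [CommSemiring R] (x y : R) :
    ∑ i : Z₁₁, (if i ∈ 𝓗 then x else y) *
      ∑ j ∈ (andrasfai 4).neighborFinset i, (if j ∈ 𝓗 then x else y) =
      4 * x ^ 2 + 16 * x * y + 24 * y ^ 2 := by
  simp only [neighborFinset_eq_filter, sum_filter, sum_zmod_eleven]
  simp +decide only [if_true, if_false]
  ring

variable {n s : ℕ}

theorem sum_csize_four_le (h1 : 4 * n ≤ 11 * s) (h2 : 8 * s ≤ 3 * n) {J : Finset Z₁₁}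
    (hJ : IsIndep (andrasfai 4) J) : ∑ i ∈ J, csize 4 n s i ≤ s := by
  obtain ⟨a, hJa⟩ := hJ.subset_interval_andrasfai_four
  have interval_counts : ∀ a : Z₁₁,
      (#({a, a + 1, a + 2, a + 3} ∩ 𝓗) = 1 ∧ #({a, a + 1, a + 2, a + 3} \ 𝓗) = 3) ∨
      (#({a, a + 1, a + 2, a + 3} ∩ 𝓗) = 2 ∧ #({a, a + 1, a + 2, a + 3} \ 𝓗) = 2) := by
    decide
  calc ∑ i ∈ J, csize 4 n s i ≤ ∑ i ∈ {a, a + 1, a + 2, a + 3}, csize 4 n s i :=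
        sum_le_sum_of_subset hJa
    _ ≤ s := by
      simp only [csize_four, sum_ite_mem_const, smul_eq_mul]
      rcases interval_counts a with ⟨hH, hL⟩ | ⟨hH, hL⟩ <;> rw [hH, hL] <;> omega

theorem card_canonical_four (h1 : 4 * n ≤ 11 * s) (h2 : 8 * s ≤ 3 * n) :
    Fintype.card (Σ i : Z₁₁, Fin (csize 4 n s i)) = n := by
  have counts : #(univ ∩ 𝓗) = 3 ∧ #(univ \ 𝓗) = 8 := by decide
  simp only [Fintype.card_sigma, Fintype.card_fin, csize_four, sum_ite_mem_const, smul_eq_mul,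
    counts]
  omega

theorem canonical_four_cliqueFree : (canonical 4 n s).CliqueFree 3 :=
  CliqueFree.of_hom (Hom.comap _ _) andrasfai_four_cliqueFree

theorem card_le_of_isIndep_canonical_four (h1 : 4 * n ≤ 11 * s) (h2 : 8 * s ≤ 3 * n)
    {t : Finset (Σ i : Z₁₁, Fin (csize 4 n s i))} (ht : IsIndep (canonical 4 n s) t) :
    #t ≤ s := by
  refine (card_le_sum_card_image_sigmaFst t).trans ?_
  simpa only [Fintype.card_fin] using sum_csize_four_le h1 h2 ht.image_of_comap

theorem exists_isIndep_canonical_four_card_eq (h1 : 4 * n ≤ 11 * s) (h2 : 8 * s ≤ 3 * n) :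
    ∃ t, IsIndep (canonical 4 n s) t ∧ #t = s := by
  have interval_indep : IsIndep (andrasfai 4) {0, 1, 2, 3} := by
    unfold IsIndep
    decide
  have counts : #({0, 1, 2, 3} ∩ 𝓗) = 1 ∧ #({0, 1, 2, 3} \ 𝓗) = 3 := by decide
  refine ⟨({0, 1, 2, 3} : Finset Z₁₁).sigma fun _ => univ,
    interval_indep.comap_of_mapsTo fun v hv => (mem_sigma.1 hv).1, ?_⟩
  simp only [card_sigma, card_univ, Fintype.card_fin, csize_four, sum_ite_mem_const, smul_eq_mul,
    counts]
  omega

theorem two_mul_card_edgeFinset_canonical_four (h1 : 4 * n ≤ 11 * s) (h2 : 8 * s ≤ 3 * n)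
    [DecidableRel (canonical 4 n s).Adj] :
    (2 * #(canonical 4 n s).edgeFinset : ℤ) = 2 * (6 * n ^ 2 - 32 * n * s + 44 * s ^ 2) := by
  have hcast (i : Z₁₁) :
      (csize 4 n s i : ℤ) = if i ∈ 𝓗 then (3 * n - 8 * s : ℤ) else 3 * s - n := by
    rw [csize_four]
    split_ifs <;> omega
  have hE : 2 * #(canonical 4 n s).edgeFinset =
      ∑ i, csize 4 n s i * ∑ j ∈ (andrasfai 4).neighborFinset i, csize 4 n s j := by
    convert two_mul_card_edgeFinset_comap_sigmaFst (α := fun i => Fin (csize 4 n s i)) (andrasfai 4)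
      using 2
    · congr!
    · simp only [Fintype.card_fin]
  calc (2 * #(canonical 4 n s).edgeFinset : ℤ)
      = ∑ i, (csize 4 n s i : ℤ) * ∑ j ∈ (andrasfai 4).neighborFinset i, (csize 4 n s j : ℤ) := by
        exact_mod_cast hE
    _ = 4 * (3 * n - 8 * s) ^ 2 + 16 * (3 * n - 8 * s) * (3 * s - n) + 24 * (3 * s - n) ^ 2 := by
        simp only [hcast]
        exact sum_andrasfai_four_neighbor_weights _ _
    _ = 2 * (6 * n ^ 2 - 32 * n * s + 44 * s ^ 2) := by ring

end AndrasfaiFour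

/-- for `4n/11 ≤ s ≤ 3n/8` the canonical blow-up `G(n;4,s)` is
triangle-free, has `n` vertices, independence number exactly `s`, and exactly
`6n² - 32ns + 44s²` edges; consequently `ex(n,s) ≥ 6n² - 32ns + 44s²`. -/
theorem stmt_12 (n s : ℕ) (h1 : 4 * n ≤ 11 * s) (h2 : 8 * s ≤ 3 * n) :
    haveI : NeZero (3 * 4 - 1) := ⟨by omega⟩
    haveI : DecidableRel (canonical 4 n s).Adj := Classical.decRel _
    (canonical 4 n s).CliqueFree 3 ∧
      Fintype.card (Σ i : ZMod (3 * 4 - 1), Fin (csize 4 n s i)) = n ∧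
      (∃ t, IsIndep (canonical 4 n s) t ∧ t.card = s) ∧
      (∀ t, IsIndep (canonical 4 n s) t → t.card ≤ s) ∧
      (2 * (canonical 4 n s).edgeFinset.card : ℤ) =
        2 * (6 * n ^ 2 - 32 * n * s + 44 * s ^ 2) ∧
      (6 * n ^ 2 - 32 * n * s + 44 * s ^ 2 : ℤ) ≤ exRT n s := by
  classical
  have hV := card_canonical_four h1 h2
  have hE := two_mul_card_edgeFinset_canonical_four h1 h2
  have hindep : ∀ t, IsIndep (canonical 4 n s) t → #t ≤ s := fun _ =>
    card_le_of_isIndep_canonical_four h1 h2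
  have hex : (#(canonical 4 n s).edgeFinset : ℤ) ≤ exRT n s := by
    exact_mod_cast le_exRT hV canonical_four_cliqueFree hindep
  exact ⟨canonical_four_cliqueFree, hV, exists_isIndep_canonical_four_card_eq h1 h2, hindep, hE,
    by linarith⟩
end

section
/- Let G be a triangle-free graph on n vertices with α(G) = s where s > 4n/11, and let (φ, ψ) be an H-mould for G for some graph H. If X, Y are disjoint independent sets of size s in G and i, j, k are three distinct vertices of H, then some φ(i), φ(j), or φ(k) is disjoint from X or from Y. -/
open SimpleGraph

/-- Fact f:edge: let `G` be triangle-free on `n` vertices with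
`α(G) = s > 4n/11` and `(φ, ψ)` an `H`-mould for `G`.  If `X, Y` are disjoint
independent `s`-sets and `i, j, k ∈ V(H)` are distinct, then one of `φ(i)`,
`φ(j)`, `φ(k)` is disjoint from `X` or from `Y`. -/
theorem stmt_13 {V β : Type*} [Fintype V] [DecidableEq V]
    (G : SimpleGraph V) [DecidableRel G.Adj] (H : SimpleGraph β)
    (n s : ℕ) (hcard : Fintype.card V = n) (hs : 4 * n < 11 * s)
    (htf : G.CliqueFree 3)
    (hα₁ : ∃ t : Finset V, IsIndep G t ∧ t.card = s)
    (hα₂ : ∀ t : Finset V, IsIndep G t → t.card ≤ s)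
    (φ ψ : β → Finset V)
    (hφinj : Function.Injective φ)
    (hφind : ∀ x, IsIndep G (φ x) ∧ (φ x).card = s)
    (hφadj : ∀ x y : β, x ≠ y → (Disjoint (φ x) (φ y) ↔ H.Adj x y))
    (hψind : ∀ x, IsIndep G (ψ x) ∧ (ψ x).card = 3 * s - n)
    (hψN : ∀ x, ∀ z ∈ ψ x, G.neighborFinset z = φ x)
    (X Y : Finset V) (hXind : IsIndep G X) (hYind : IsIndep G Y)
    (hXcard : X.card = s) (hYcard : Y.card = s) (hXY : Disjoint X Y)
    (i j k : β) (hij : i ≠ j) (hik : i ≠ k) (hjk : j ≠ k) :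
    ∃ x ∈ ({i, j, k} : Set β), Disjoint (φ x) X ∨ Disjoint (φ x) Y := by
  by_contra hcon
  push_neg at hcon
  have key1 : ∀ (x : β) (T : Finset V), IsIndep G T → ¬Disjoint (φ x) T →
      Disjoint (ψ x) T := by
    intro x T hT hnd
    obtain ⟨v, hvφ, hvT⟩ := Finset.not_disjoint_iff.mp hnd
    rw [Finset.disjoint_left]
    intro z hz hzT
    have hadj : G.Adj z v := by
      rw [← SimpleGraph.mem_neighborFinset, hψN x z hz]; exact hvφ
    exact hT z hzT v hvT hadj.ne hadj
  have hψdisj : ∀ x y : β, x ≠ y → Disjoint (ψ x) (ψ y) := by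
    intro x y hxy
    rw [Finset.disjoint_left]
    intro z hzx hzy
    exact hxy (hφinj ((hψN x z hzx).symm.trans (hψN y z hzy)))
  have hi := hcon i (by simp)
  have hj := hcon j (by simp)
  have hk := hcon k (by simp)
  have dI : Disjoint (ψ i) (X ∪ Y) := by
    rw [Finset.disjoint_union_right]
    exact ⟨key1 i X hXind hi.1, key1 i Y hYind hi.2⟩
  have dJ : Disjoint (ψ j) (X ∪ Y) := by
    rw [Finset.disjoint_union_right]
    exact ⟨key1 j X hXind hj.1, key1 j Y hYind hj.2⟩
  have dK : Disjoint (ψ k) (X ∪ Y) := by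
    rw [Finset.disjoint_union_right]
    exact ⟨key1 k X hXind hk.1, key1 k Y hYind hk.2⟩
  have c1 : (X ∪ Y).card = s + s := by
    rw [Finset.card_union_of_disjoint hXY, hXcard, hYcard]
  have d2 : Disjoint (X ∪ Y ∪ ψ i) (ψ j) := by
    rw [Finset.disjoint_union_left]
    exact ⟨dJ.symm, hψdisj i j hij⟩
  have d3 : Disjoint (X ∪ Y ∪ ψ i ∪ ψ j) (ψ k) := by
    rw [Finset.disjoint_union_left, Finset.disjoint_union_left]
    exact ⟨⟨dK.symm, hψdisj i k hik⟩, hψdisj j k hjk⟩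
  have c4 : (X ∪ Y ∪ ψ i ∪ ψ j ∪ ψ k).card
      = s + s + (ψ i).card + (ψ j).card + (ψ k).card := by
    rw [Finset.card_union_of_disjoint d3, Finset.card_union_of_disjoint d2,
      Finset.card_union_of_disjoint dI.symm, c1]
  have hle : (X ∪ Y ∪ ψ i ∪ ψ j ∪ ψ k).card ≤ n := by
    rw [← hcard, ← Finset.card_univ]
    exact Finset.card_le_card (Finset.subset_univ _)
  have hci := (hψind i).2
  have hcj := (hψind j).2
  have hck := (hψind k).2
  omega
end

section
/- Let G be a triangle-free graph on n vertices with α(G) = s where s > 4n/11, and let (φ, ψ) be a K_{1,3}-mould for G with centre x and leaves u, v, w. Then for every independent set Z of size s in G, at least one of φ(x), φ(u), φ(v), φ(w) is disjoint from Z. -/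
open SimpleGraph

/-- Fact f:claw: let `G` be triangle-free on `n` vertices with
`α(G) = s > 4n/11`, and let `(φ, ψ)` be a `K_{1,3}`-mould for `G` with centre
`x` and leaves `u, v, w` (in the mould conditions, the adjacency of `K_{1,3}`
is: the centre is adjacent exactly to the three leaves, and the leaves are
pairwise non-adjacent).  Then every independent `s`-set `Z` is disjoint from
one of `φ(x)`, `φ(u)`, `φ(v)`, `φ(w)`. -/
theorem stmt_14 {V : Type*} [Fintype V] [DecidableEq V]
    (G : SimpleGraph V) [DecidableRel G.Adj]
    (n s : ℕ) (hcard : Fintype.card V = n) (hs : 4 * n < 11 * s)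
    (hn : n < 3 * s)
    (htf : G.CliqueFree 3)
    (hα₁ : ∃ t : Finset V, IsIndep G t ∧ t.card = s)
    (hα₂ : ∀ t : Finset V, IsIndep G t → t.card ≤ s)
    (x u v w : Fin 4) (hdist : x ≠ u ∧ x ≠ v ∧ x ≠ w ∧ u ≠ v ∧ u ≠ w ∧ v ≠ w)
    (φ ψ : Fin 4 → Finset V)
    (hφinj : Function.Injective φ)
    (hφind : ∀ y, IsIndep G (φ y) ∧ (φ y).card = s)
    -- the `φ`-images realise the adjacency of the claw `K_{1,3}`:
    (hφx : Disjoint (φ x) (φ u) ∧ Disjoint (φ x) (φ v) ∧ Disjoint (φ x) (φ w))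
    (hφleaves : ¬ Disjoint (φ u) (φ v) ∧ ¬ Disjoint (φ u) (φ w) ∧
      ¬ Disjoint (φ v) (φ w))
    (hψind : ∀ y, IsIndep G (ψ y) ∧ (ψ y).card = 3 * s - n)
    (hψN : ∀ y, ∀ z ∈ ψ y, G.neighborFinset z = φ y)
    (Z : Finset V) (hZind : IsIndep G Z) (hZcard : Z.card = s) :
    Disjoint (φ x) Z ∨ Disjoint (φ u) Z ∨ Disjoint (φ v) Z ∨
      Disjoint (φ w) Z := by
  by_contra hcon
  push_neg at hcon
  obtain ⟨hx, hu, hv, hw⟩ := hcon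
  rw [Finset.not_disjoint_iff] at hx hu hv hw
  obtain ⟨hxu, hxv, hxw, huv, huw, hvw⟩ := hdist
  -- basic neighborhood fact
  have hnb : ∀ y : Fin 4, ∀ z ∈ ψ y, ∀ p, G.Adj z p ↔ p ∈ φ y := by
    intro y z hz p
    rw [← hψN y z hz, SimpleGraph.mem_neighborFinset]
  -- each ψ y is disjoint from Z (given Z meets φ y)
  have hψZ : ∀ y : Fin 4, (∃ p, p ∈ φ y ∧ p ∈ Z) → ∀ z ∈ ψ y, z ∉ Z := by
    rintro y ⟨p, hpφ, hpZ⟩ z hz hzZ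
    have hadj : G.Adj z p := (hnb y z hz p).mpr hpφ
    exact hZind z hzZ p hpZ (G.ne_of_adj hadj) hadj
  have hψxZ := hψZ x hx
  have hψuZ := hψZ u hu
  have hψvZ := hψZ v hv
  have hψwZ := hψZ w hw
  -- triangle-freeness: ψ's of overlapping φ's are non-adjacent
  have htri : ∀ y y' : Fin 4, ¬ Disjoint (φ y) (φ y') →
      ∀ z ∈ ψ y, ∀ z' ∈ ψ y', ¬ G.Adj z z' := by
    intro y y' hnd z hz z' hz' hadj
    obtain ⟨p, hp, hp'⟩ := Finset.not_disjoint_iff.mp hnd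
    exact htf {z, z', p} (SimpleGraph.is3Clique_triple_iff.mpr
      ⟨hadj, (hnb y z hz p).mpr hp, (hnb y' z' hz' p).mpr hp'⟩)
  -- ψ's are pairwise disjoint
  have hψdisj : ∀ y y' : Fin 4, y ≠ y' → Disjoint (ψ y) (ψ y') := by
    intro y y' hne
    rw [Finset.disjoint_left]
    intro z hz hz'
    exact hne (hφinj ((hψN y z hz).symm.trans (hψN y' z hz')))
  ---- First independent set: (Z \ φ x) ∪ ψ x
  have hSind : IsIndep G ((Z \ φ x) ∪ ψ x) := by
    intro a ha b hb hne hadj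
    simp only [Finset.mem_union, Finset.mem_sdiff] at ha hb
    rcases ha with ⟨haZ, haφ⟩ | haψ
    · rcases hb with ⟨hbZ, _⟩ | hbψ
      · exact hZind a haZ b hbZ hne hadj
      · exact haφ ((hnb x b hbψ a).mp hadj.symm)
    · rcases hb with ⟨_, hbφ⟩ | hbψ
      · exact hbφ ((hnb x a haψ b).mp hadj)
      · exact (hψind x).1 a haψ b hbψ hne hadj
  have hSdisj : Disjoint (Z \ φ x) (ψ x) := by
    rw [Finset.disjoint_right]
    intro z hz hz'
    exact hψxZ z hz (Finset.mem_sdiff.mp hz').1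
  have hScard : (Z \ φ x).card + (ψ x).card ≤ s := by
    rw [← Finset.card_union_of_disjoint hSdisj]
    exact hα₂ _ hSind
  have hZx : (Z \ φ x).card + (Z ∩ φ x).card = s := by
    rw [Finset.card_sdiff_add_card_inter, hZcard]
  ---- Second independent set: (Z \ (φ u ∪ φ v ∪ φ w)) ∪ (ψ u ∪ ψ v ∪ ψ w)
  set U : Finset V := φ u ∪ φ v ∪ φ w with hU
  have hleafmem : ∀ y : Fin 4, (y = u ∨ y = v ∨ y = w) → φ y ⊆ U := by
    rintro y (rfl | rfl | rfl)
    · exact (Finset.subset_union_left).trans Finset.subset_union_left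
    · exact (Finset.subset_union_right).trans Finset.subset_union_left
    · exact Finset.subset_union_right
  have hnd : ∀ y y' : Fin 4, (y = u ∨ y = v ∨ y = w) → (y' = u ∨ y' = v ∨ y' = w) →
      y ≠ y' → ¬ Disjoint (φ y) (φ y') := by
    rintro y y' (rfl | rfl | rfl) (rfl | rfl | rfl) hne
    all_goals first
      | exact absurd rfl hne
      | exact hφleaves.1
      | exact hφleaves.2.1
      | exact hφleaves.2.2
      | exact fun h => hφleaves.1 h.symm
      | exact fun h => hφleaves.2.1 h.symm
      | exact fun h => hφleaves.2.2 h.symm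
  have hψψ : ∀ y y' : Fin 4, (y = u ∨ y = v ∨ y = w) → (y' = u ∨ y' = v ∨ y' = w) →
      ∀ z ∈ ψ y, ∀ z' ∈ ψ y', z ≠ z' → ¬ G.Adj z z' := by
    intro y y' hy hy' z hz z' hz' hne
    by_cases h : y = y'
    · subst h; exact (hψind y).1 z hz z' hz' hne
    · exact htri y y' (hnd y y' hy hy' h) z hz z' hz'
  have hZpψ : ∀ y : Fin 4, (y = u ∨ y = v ∨ y = w) → ∀ a, a ∉ U →
      ∀ z ∈ ψ y, ¬ G.Adj a z := by
    intro y hy a haU z hz hadj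
    exact haU (hleafmem y hy ((hnb y z hz a).mp hadj.symm))
  have hBind : IsIndep G ((Z \ U) ∪ (ψ u ∪ ψ v ∪ ψ w)) := by
    intro a ha b hb hne hadj
    simp only [Finset.mem_union, Finset.mem_sdiff] at ha hb
    rcases ha with ⟨haZ, haU⟩ | (haψ | haψ) | haψ
    · rcases hb with ⟨hbZ, _⟩ | (hbψ | hbψ) | hbψ
      · exact hZind a haZ b hbZ hne hadj
      · exact hZpψ u (Or.inl rfl) a haU b hbψ hadj
      · exact hZpψ v (Or.inr (Or.inl rfl)) a haU b hbψ hadj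
      · exact hZpψ w (Or.inr (Or.inr rfl)) a haU b hbψ hadj
    all_goals (
      rcases hb with ⟨hbZ, hbU⟩ | (hbψ | hbψ) | hbψ
      · first
        | exact hZpψ u (Or.inl rfl) b hbU a haψ hadj.symm
        | exact hZpψ v (Or.inr (Or.inl rfl)) b hbU a haψ hadj.symm
        | exact hZpψ w (Or.inr (Or.inr rfl)) b hbU a haψ hadj.symm
      all_goals first
        | exact hψψ u u (Or.inl rfl) (Or.inl rfl) a haψ b hbψ hne hadj
        | exact hψψ u v (Or.inl rfl) (Or.inr (Or.inl rfl)) a haψ b hbψ hne hadj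
        | exact hψψ u w (Or.inl rfl) (Or.inr (Or.inr rfl)) a haψ b hbψ hne hadj
        | exact hψψ v u (Or.inr (Or.inl rfl)) (Or.inl rfl) a haψ b hbψ hne hadj
        | exact hψψ v v (Or.inr (Or.inl rfl)) (Or.inr (Or.inl rfl)) a haψ b hbψ hne hadj
        | exact hψψ v w (Or.inr (Or.inl rfl)) (Or.inr (Or.inr rfl)) a haψ b hbψ hne hadj
        | exact hψψ w u (Or.inr (Or.inr rfl)) (Or.inl rfl) a haψ b hbψ hne hadj
        | exact hψψ w v (Or.inr (Or.inr rfl)) (Or.inr (Or.inl rfl)) a haψ b hbψ hne hadj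
        | exact hψψ w w (Or.inr (Or.inr rfl)) (Or.inr (Or.inr rfl)) a haψ b hbψ hne hadj)
  -- cardinality of the second set
  have hψuv : Disjoint (ψ u) (ψ v) := hψdisj u v huv
  have hψuvw : Disjoint (ψ u ∪ ψ v) (ψ w) :=
    Finset.disjoint_union_left.mpr ⟨hψdisj u w huw, hψdisj v w hvw⟩
  have hψZU : Disjoint (Z \ U) (ψ u ∪ ψ v ∪ ψ w) := by
    rw [Finset.disjoint_right]
    intro z hz hz'
    have hzZ := (Finset.mem_sdiff.mp hz').1
    rcases Finset.mem_union.mp hz with hz | hz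
    · rcases Finset.mem_union.mp hz with hz | hz
      · exact hψuZ z hz hzZ
      · exact hψvZ z hz hzZ
    · exact hψwZ z hz hzZ
  have hBcard : (Z \ U).card + ((ψ u).card + (ψ v).card + (ψ w).card) ≤ s := by
    have h1 : (ψ u ∪ ψ v ∪ ψ w).card = (ψ u).card + (ψ v).card + (ψ w).card := by
      rw [Finset.card_union_of_disjoint hψuvw, Finset.card_union_of_disjoint hψuv]
    rw [← h1, ← Finset.card_union_of_disjoint hψZU]
    exact hα₂ _ hBind
  have hZU : (Z \ U).card + (Z ∩ U).card = s := by
    rw [Finset.card_sdiff_add_card_inter, hZcard]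
  ---- Z ∩ φ x and Z ∩ U are disjoint subsets of Z
  have hxUdisj : Disjoint (Z ∩ φ x) (Z ∩ U) := by
    have : Disjoint (φ x) U :=
      Finset.disjoint_union_right.mpr
        ⟨Finset.disjoint_union_right.mpr ⟨hφx.1, hφx.2.1⟩, hφx.2.2⟩
    exact (this.mono Finset.inter_subset_right Finset.inter_subset_right)
  have hsum : (Z ∩ φ x).card + (Z ∩ U).card ≤ s := by
    rw [← Finset.card_union_of_disjoint hxUdisj, ← hZcard]
    exact Finset.card_le_card (Finset.union_subset Finset.inter_subset_left
      Finset.inter_subset_left)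
  ---- arithmetic contradiction
  have hψxcard := (hψind x).2
  have hψucard := (hψind u).2
  have hψvcard := (hψind v).2
  have hψwcard := (hψind w).2
  omega
end

section
/- Let n, s be integers with 4n/11 < s < 3n/8 and suppose that ex(n', s') ≤ g_4(n', s') for all pairs (n', s') with 11s' - 4n' < 11s - 4n (minimal counterexample hypothesis), and that ex(n,s) > g_4(n,s). Then ex(n+1, s) < ex(n,s) + s - 1. -/
open SimpleGraph

/-- `g₄(n,s) = 6n² - 32ns + 44s²`. -/
def gFour (n s : ℤ) : ℤ := 6 * n ^ 2 - 32 * n * s + 44 * s ^ 2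

open scoped Classical in
lemma two_mul_exRT_le (N s : ℕ) : 2 * exRT N s ≤ N * s := by
  have hsup : exRT N s ≤ N * s / 2 := by
    apply csSup_le'
    rintro m ⟨G, hG, hs, rfl⟩
    rw [Nat.le_div_iff_mul_le (by norm_num)]
    have hdeg : ∀ v : Fin N, G.degree v ≤ s := by
      intro v
      rw [← SimpleGraph.card_neighborFinset_eq_degree]
      apply hs
      intro x hx y hy hxy hadj
      rw [SimpleGraph.mem_neighborFinset] at hx hy
      exact hG {v, x, y} (SimpleGraph.is3Clique_triple_iff.mpr ⟨hx, hy, hadj⟩)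
    calc G.edgeFinset.card * 2 = 2 * G.edgeFinset.card := mul_comm _ _
      _ = ∑ v : Fin N, G.degree v := (SimpleGraph.sum_degrees_eq_twice_card_edges G).symm
      _ ≤ ∑ _v : Fin N, s := Finset.sum_le_sum fun v _ => hdeg v
      _ = N * s := by simp [Finset.sum_const, mul_comm]
  calc 2 * exRT N s ≤ 2 * (N * s / 2) := by omega
    _ ≤ N * s := by omega

/-- under the minimal-counterexample hypothesis,
`ex(n+1, s) < ex(n,s) + s - 1`. -/
theorem stmt_16 (n s : ℕ) (h1 : 4 * n < 11 * s) (h2 : 8 * s < 3 * n)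
    (hmin : ∀ n' s' : ℕ, 11 * (s' : ℤ) - 4 * n' < 11 * (s : ℤ) - 4 * n →
      (exRT n' s' : ℤ) ≤ gFour n' s')
    (hbig : gFour n s < (exRT n s : ℤ)) :
    (exRT (n + 1) s : ℤ) < (exRT n s : ℤ) + s - 1 := by
  have h1' : 4 * (n : ℤ) < 11 * s := by exact_mod_cast h1
  have h2' : 8 * (s : ℤ) < 3 * n := by exact_mod_cast h2
  have hn0 : 1 ≤ n := by omega
  have hn : (1 : ℤ) ≤ n := by exact_mod_cast hn0
  by_cases hδ : 11 * (s : ℤ) - 4 * n ≤ 2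
  · -- small δ: use trivial bound
    have htriv : (2 : ℤ) * exRT (n + 1) s ≤ (n + 1) * s := by
      have := two_mul_exRT_le (n + 1) s
      exact_mod_cast this
    unfold gFour at hbig
    nlinarith [sq_nonneg ((s : ℤ) - n), sq_nonneg (11 * (s:ℤ) - 4 * n),
      mul_pos (by linarith : (0:ℤ) < 11 * s - 4 * n) (by linarith : (0:ℤ) < 3 * n - 8 * s)]
  · -- δ ≥ 3
    push_neg at hδ
    have hδ3 : 3 ≤ 11 * (s : ℤ) - 4 * n := by omega
    have hle : (exRT (n + 1) s : ℤ) ≤ gFour (n + 1) s := by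
      apply hmin
      push_cast
      linarith
    unfold gFour at hle hbig
    nlinarith
end

section
/- Let n, s be integers with 4n/11 < s < 3n/8, suppose ex(n,s) > g_4(n,s), and suppose ex(n', s') ≤ g_4(n', s') whenever 11s' - 4n' < 11s - 4n. Then ex(n-2, s-1) < ex(n,s) - (2s - 1). -/
open SimpleGraph

open scoped Classical in
/-- Trivial bound: a triangle-free graph with independence number at most `t`
has maximum degree at most `t`, so `2 · ex(m,t) ≤ m·t`. -/
lemma two_exRT_le (m t : ℕ) : 2 * exRT m t ≤ m * t := by
  have hb : exRT m t ≤ m * t / 2 := by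
    apply csSup_le'
    rintro k ⟨G, h3, hind, rfl⟩
    have hdeg : ∀ v : Fin m, G.degree v ≤ t := by
      intro v
      apply hind
      intro x hx y hy hxy hadj
      rw [mem_neighborFinset] at hx hy
      exact h3 {v, x, y} (is3Clique_triple_iff.mpr ⟨hx, hy, hadj⟩)
    have hsum : ∑ v : Fin m, G.degree v = 2 * G.edgeFinset.card :=
      G.sum_degrees_eq_twice_card_edges
    have : 2 * G.edgeFinset.card ≤ m * t := by
      rw [← hsum]
      calc ∑ v : Fin m, G.degree v ≤ ∑ _v : Fin m, t := Finset.sum_le_sum fun v _ => hdeg v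
        _ = m * t := by simp [Finset.sum_const, mul_comm]
    omega
  omega

/-- Fact f:2redux: under the minimal-counterexample hypothesis,
`ex(n-2, s-1) < ex(n,s) - (2s - 1)`. -/
theorem stmt_17 (n s : ℕ) (h1 : 4 * n < 11 * s) (h2 : 8 * s < 3 * n)
    (hmin : ∀ n' s' : ℕ, 11 * (s' : ℤ) - 4 * n' < 11 * (s : ℤ) - 4 * n →
      (exRT n' s' : ℤ) ≤ gFour n' s')
    (hbig : gFour n s < (exRT n s : ℤ)) :
    (exRT (n - 2) (s - 1) : ℤ) < (exRT n s : ℤ) - (2 * s - 1) := by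
  have hs1 : 1 ≤ s := by omega
  have hn2 : 2 ≤ n := by omega
  have hcn : ((n - 2 : ℕ) : ℤ) = (n : ℤ) - 2 := by push_cast [hn2]; ring
  have hcs : ((s - 1 : ℕ) : ℤ) = (s : ℤ) - 1 := by push_cast [hs1]; ring
  by_cases hd : 4 * (n : ℤ) = 11 * s - 1
  · -- δ = 1 case : use the trivial bound
    have htriv : 2 * (exRT (n - 2) (s - 1) : ℤ) ≤ ((n - 2 : ℕ) : ℤ) * ((s - 1 : ℕ) : ℤ) := by
      exact_mod_cast (two_exRT_le (n - 2) (s - 1))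
    rw [hcn, hcs] at htriv
    unfold gFour at hbig
    nlinarith [hbig, htriv, hd, sq_nonneg ((s : ℤ))]
  · -- δ ≥ 2 case : use the minimality hypothesis
    have hd2 : 4 * (n : ℤ) ≤ 11 * s - 2 := by
      have : 4 * (n : ℤ) < 11 * s := by exact_mod_cast h1
      omega
    have hm := hmin (n - 2) (s - 1) (by rw [hcn, hcs]; linarith)
    rw [hcn, hcs] at hm
    unfold gFour at hm hbig
    nlinarith [hm, hbig, hd2]
end
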